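/- Let n ∈ ℕ^q and m ∈ ℕ^{p−q} be such that the concatenation n⊔m = (n_1,…,n_q,m_1,…,m_{p−q}) ∈ ℕ^p is near the diagonal and m is on the step-line. Let A_1, …, A_q and B_1, …, B_{p−q} be real polynomials with deg A_j ≤ n_j − 1 and deg B_j ≤ m_j − 1, and set F(x) = Σ_{j=1}^q A_j(x) w_j(x) + Σ_{j=1}^{p−q} B_j(x) v_j(x). Then there exists a real polynomial p̃ of degree at most |n| + |m| − 1 such that for every real s > 1, ∫₀^∞ F(x) x^{s−1} dx = (Γ(s+a)/Γ(s+b+n)) · p̃(s). -/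

import Mathlib

/-!
The Mellin transform of `x ^ k * g x` at `s` is that of `g` at `s + k`, so the transform of `F`
is a combination of the values `Γ(s+k+a) / Γ(s+k+b+d)`, where `d = e_j` for `w_j` and `d = 0` for
`v_i` (the latter multiplied by `(s+k-1)^i`). Since `Γ(x+k) = Γ(x) (x)_k`, each of them is
`Γ(s+a) / Γ(s+b+n)` times the polynomial `(s+a)_k (s+b+d+k)_{n-d-k}`, which makes sense because
near-diagonality gives `d + k ≤ n` for every `k` that occurs. Its degree is `|n| - |d| + (p-q) k`,
and near-diagonality together with the step-line condition on `m` keeps it (plus `i` for `v_i`)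
below `|n| + |m|`.
-/

open MeasureTheory Finset Polynomial

theorem Real.Gamma_add_nat_eq_mul_ascPochhammer {x : ℝ} (hx : ∀ i : ℕ, x ≠ -i) (k : ℕ) :
    Real.Gamma (x + k) = Real.Gamma x * (ascPochhammer ℝ k).eval x := by
  induction k with
  | zero => simp
  | succ k ih =>
    have hxk : x + k ≠ 0 := fun h => hx k (eq_neg_of_add_eq_zero_left h)
    rw [Nat.cast_succ, ← add_assoc, Real.Gamma_add_one hxk, ih, ascPochhammer_succ_right]
    simp only [eval_mul, eval_add, eval_X, eval_natCast]
    ring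

section Mellin

variable {f : ℝ → ℝ} {s : ℝ}

theorem integrableOn_rpow_mul_of_continuousOn (hf : ContinuousOn f (Set.Ioi 0))
    (h : IntegrableOn (fun x : ℝ => x ^ (s - 1) * |f x|) (Set.Ioi 0)) :
    IntegrableOn (fun x : ℝ => x ^ (s - 1) * f x) (Set.Ioi 0) := by
  refine h.mono' ?_ ?_
  · refine ContinuousOn.aestronglyMeasurable ?_ measurableSet_Ioi
    exact (continuousOn_id.rpow_const fun x hx => Or.inl (ne_of_gt hx)).mul hf
  · filter_upwards [ae_restrict_mem measurableSet_Ioi] with x hx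
    rw [norm_mul, Real.norm_eq_abs, Real.norm_eq_abs, abs_of_nonneg (Real.rpow_nonneg hx.le _)]

theorem eqOn_eval_mul_mul_rpow {P : ℝ[X]} {N : ℕ} (hP : P.degree < N) :
    Set.EqOn (fun x : ℝ => P.eval x * f x * x ^ (s - 1))
      (fun x => ∑ k ∈ range N, P.coeff k * (x ^ (s + k - 1) * f x)) (Set.Ioi 0) := by
  intro x hx
  have hPx : P.eval x = ∑ k ∈ range N, P.coeff k * x ^ k := by
    rcases eq_or_ne P 0 with rfl | hP0
    · simp
    · exact eval_eq_sum_range' ((natDegree_lt_iff_degree_lt hP0).mpr hP) x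
  simp only [hPx, sum_mul]
  refine sum_congr rfl fun k _ => ?_
  rw [add_sub_right_comm, Real.rpow_add hx, Real.rpow_natCast]
  ring

theorem integrableOn_eval_mul_mul_rpow
    (hf : ∀ σ : ℝ, 1 < σ → IntegrableOn (fun x : ℝ => x ^ (σ - 1) * f x) (Set.Ioi 0)) (hs : 1 < s)
    {P : ℝ[X]} {N : ℕ} (hP : P.degree < N) :
    IntegrableOn (fun x : ℝ => P.eval x * f x * x ^ (s - 1)) (Set.Ioi 0) := by
  refine IntegrableOn.congr_fun ?_ (eqOn_eval_mul_mul_rpow hP).symm measurableSet_Ioi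
  exact integrable_finsetSum _ fun k _ =>
    (hf (s + k) (by linarith [k.cast_nonneg (α := ℝ)])).const_mul _

theorem integral_eval_mul_mul_rpow
    (hf : ∀ σ : ℝ, 1 < σ → IntegrableOn (fun x : ℝ => x ^ (σ - 1) * f x) (Set.Ioi 0)) (hs : 1 < s)
    {P : ℝ[X]} {N : ℕ} (hP : P.degree < N) :
    ∫ x in Set.Ioi 0, P.eval x * f x * x ^ (s - 1)
      = ∑ k ∈ range N, P.coeff k * ∫ x in Set.Ioi 0, x ^ (s + k - 1) * f x := by
  rw [setIntegral_congr_fun measurableSet_Ioi (eqOn_eval_mul_mul_rpow hP), integral_finsetSum]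
  · simp only [integral_const_mul]
  · exact fun k _ => (hf (s + k) (by linarith [k.cast_nonneg (α := ℝ)])).const_mul _

end Mellin

section GammaRatio

variable {ι κ : Type*} [Fintype ι] [Fintype κ]

noncomputable def gammaRatio (a : ι → ℝ) (b : κ → ℝ) (s : ℝ) : ℝ :=
  (∏ l, Real.Gamma (s + a l)) / ∏ l, Real.Gamma (s + b l)

/-- `(s+a)_k (s+b+d+k)_{n-d-k}` as a polynomial in `s`; the truncated subtraction is only
meaningful when `d + k ≤ n`. -/
noncomputable def gammaRatioShiftPoly (a : ι → ℝ) (b : κ → ℝ) (n d : κ → ℕ) (k : ℕ) : ℝ[X] :=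
  (∏ l, taylor (a l) (ascPochhammer ℝ k)) *
    ∏ l, taylor (b l + d l + k) (ascPochhammer ℝ (n l - d l - k))

theorem natDegree_gammaRatioShiftPoly_le (a : ι → ℝ) (b : κ → ℝ) (n d : κ → ℕ) (k : ℕ) :
    (gammaRatioShiftPoly a b n d k).natDegree ≤ Fintype.card ι * k + ∑ l, (n l - d l - k) := by
  refine natDegree_mul_le.trans (add_le_add ?_ ?_) <;> refine (natDegree_prod_le _ _).trans ?_ <;>
    simp [natDegree_taylor, ascPochhammer_natDegree]

theorem gammaRatio_add_nat (a : ι → ℝ) (b : κ → ℝ) {n d : κ → ℕ} {k : ℕ}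
    (hdn : ∀ l, d l + k ≤ n l) {s : ℝ} (ha : ∀ l, 0 < s + a l) (hb : ∀ l, 0 < s + b l) :
    gammaRatio a (fun l => b l + d l) (s + k)
      = gammaRatio a (fun l => b l + n l) s * (gammaRatioShiftPoly a b n d k).eval s := by
  have ne_neg_natCast {x : ℝ} (hx : 0 < x) (i : ℕ) : x ≠ -i :=
    (lt_of_le_of_lt (by simp) hx).ne'
  have hbdk : ∀ l, 0 < s + (b l + d l + k) := fun l => by
    linarith [hb l, (d l).cast_nonneg (α := ℝ), k.cast_nonneg (α := ℝ)]
  have hnum : ∏ l, Real.Gamma (s + k + a l)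
      = (∏ l, Real.Gamma (s + a l)) * ∏ l, (ascPochhammer ℝ k).eval (s + a l) := by
    rw [← prod_mul_distrib]
    refine prod_congr rfl fun l _ => ?_
    rw [add_right_comm, Real.Gamma_add_nat_eq_mul_ascPochhammer (ne_neg_natCast (ha l))]
  have hden : ∏ l, Real.Gamma (s + (b l + n l))
      = (∏ l, Real.Gamma (s + k + (b l + d l))) *
          ∏ l, (ascPochhammer ℝ (n l - d l - k)).eval (s + (b l + d l + k)) := by
    rw [← prod_mul_distrib]
    refine prod_congr rfl fun l _ => ?_
    have hn : (n l : ℝ) = d l + k + (n l - d l - k : ℕ) := by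
      have := hdn l
      rw [Nat.cast_sub (by omega), Nat.cast_sub (by omega)]
      ring
    rw [show s + k + (b l + d l) = s + (b l + d l + k) by ring,
      ← Real.Gamma_add_nat_eq_mul_ascPochhammer (ne_neg_natCast (hbdk l)), hn]
    ring_nf
  have hΓ : ∏ l, Real.Gamma (s + k + (b l + d l)) ≠ 0 :=
    prod_ne_zero_iff.mpr fun l _ => (Real.Gamma_pos_of_pos (by linarith [hbdk l])).ne'
  have hP : ∏ l, (ascPochhammer ℝ (n l - d l - k)).eval (s + (b l + d l + k)) ≠ 0 :=
    prod_ne_zero_iff.mpr fun l _ => (ascPochhammer_pos _ _ (hbdk l)).ne'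
  simp only [gammaRatio, gammaRatioShiftPoly, eval_mul, eval_prod, taylor_eval]
  rw [hnum, hden]
  field_simp

end GammaRatio

theorem exists_integral_eval_mul_rpow_eq_gammaRatio_mul {ι κ : Type*} [Fintype ι] [Fintype κ]
    {a : ι → ℝ} {b : κ → ℝ} (ha : ∀ l, -1 < a l) (hb : ∀ l, -1 < b l) {n d : κ → ℕ}
    {g : ℝ → ℝ} {R : ℝ[X]}
    (hg : ∀ σ : ℝ, 1 < σ → IntegrableOn (fun x : ℝ => x ^ (σ - 1) * g x) (Set.Ioi 0))
    (hmellin : ∀ σ : ℝ, 1 < σ → ∫ x in Set.Ioi 0, x ^ (σ - 1) * g x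
      = gammaRatio a (fun l => b l + d l) σ * R.eval σ)
    {B : ℝ[X]} {N : ℕ} (hB : B.degree < N) (hdn : ∀ k < N, ∀ l, d l + k ≤ n l)
    {M : ℕ} (hM : ∀ k < N, Fintype.card ι * k + ∑ l, (n l - d l - k) + R.natDegree < M) :
    ∃ Q ∈ degreeLT ℝ M, ∀ s : ℝ, 1 < s → ∫ x in Set.Ioi 0, B.eval x * g x * x ^ (s - 1)
      = gammaRatio a (fun l => b l + n l) s * Q.eval s := by
  refine ⟨∑ k ∈ range N, C (B.coeff k) * gammaRatioShiftPoly a b n d k * taylor (k : ℝ) R,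
    sum_mem fun k hk => mem_degreeLT.mpr ?_, fun s hs => ?_⟩
  · have hdeg : (C (B.coeff k) * gammaRatioShiftPoly a b n d k * taylor (k : ℝ) R).natDegree
        ≤ Fintype.card ι * k + ∑ l, (n l - d l - k) + R.natDegree :=
      natDegree_mul_le.trans <| add_le_add
        ((natDegree_C_mul_le _ _).trans (natDegree_gammaRatioShiftPoly_le a b n d k))
        (natDegree_taylor R k).le
    exact degree_le_natDegree.trans_lt (mod_cast hdeg.trans_lt (hM k (mem_range.mp hk)))
  · rw [integral_eval_mul_mul_rpow hg hs hB, eval_finsetSum, mul_sum]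
    refine sum_congr rfl fun k hk => ?_
    rw [hmellin _ (by linarith [k.cast_nonneg (α := ℝ)]),
      gammaRatio_add_nat a b (hdn k (mem_range.mp hk)) (fun l => by linarith [ha l])
        (fun l => by linarith [hb l])]
    simp only [eval_mul, eval_C, taylor_eval]
    ring

section MultiIndex

variable {q r : ℕ} {n : Fin q → ℕ} {m : Fin r → ℕ} {k : ℕ}

theorem mul_add_le_sum_of_stepLine (hm : ∀ i j : Fin r, i ≤ j → m j ≤ m i ∧ m i ≤ m j + 1)
    {i : Fin r} (hk : k < m i) : r * k + (i + 1) ≤ ∑ l, m l := by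
  have hle : ∀ l, k + (if l ≤ i then 1 else 0) ≤ m l := fun l => by
    by_cases hli : l ≤ i
    · have := (hm l i hli).1
      simp only [hli, if_true]
      omega
    · have := (hm i l (le_of_not_ge hli)).2
      simp only [hli, if_false]
      omega
  have hcard : ∑ l : Fin r, (if l ≤ i then 1 else 0) = (i : ℕ) + 1 := by
    rw [sum_boole, Nat.cast_id, filter_ge_eq_Iic, Fin.card_Iic]
  calc r * k + (i + 1) = ∑ l : Fin r, (k + if l ≤ i then 1 else 0) := by
        simp [sum_add_distrib, hcard]
    _ ≤ ∑ l, m l := sum_le_sum fun l _ => hle l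

theorem single_add_le_of_abs_sub_le_one (hn : ∀ i j, |(n i : ℤ) - n j| ≤ 1) {j : Fin q}
    (hk : k < n j) (l : Fin q) : (if l = j then 1 else 0) + k ≤ n l := by
  have := abs_le.mp (hn j l)
  split_ifs with hlj
  · subst hlj; omega
  · omega

theorem le_of_abs_sub_le_one (hnm : ∀ i j, |(n i : ℤ) - m j| ≤ 1) {i : Fin r} (hk : k < m i)
    (l : Fin q) : k ≤ n l := by
  have := abs_le.mp (hnm l i)
  omega

theorem add_mul_add_sum_sub_single_lt (hn : ∀ i j, |(n i : ℤ) - n j| ≤ 1)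
    (hnm : ∀ i j, |(n i : ℤ) - m j| ≤ 1) {j : Fin q} (hk : k < n j) :
    (q + r) * k + ∑ l, (n l - (if l = j then 1 else 0) - k) < ∑ l, n l + ∑ l, m l := by
  have hsplit : ∑ l, (n l - (if l = j then 1 else 0) - k) + (1 + q * k) = ∑ l, n l := by
    have : ∑ l : Fin q, ((if l = j then 1 else 0) + k) = 1 + q * k := by
      simp [sum_add_distrib]
    rw [← this, ← sum_add_distrib]
    exact sum_congr rfl fun l _ => by
      have := single_add_le_of_abs_sub_le_one hn hk l
      omega
  have hm : r * k ≤ ∑ l, m l :=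
    calc r * k = ∑ _l : Fin r, k := by simp
      _ ≤ ∑ l, m l := sum_le_sum fun l _ => by
        have := abs_le.mp (hnm j l)
        omega
  nlinarith

theorem add_mul_add_sum_sub_add_lt (hnm : ∀ i j, |(n i : ℤ) - m j| ≤ 1)
    (hm : ∀ i j : Fin r, i ≤ j → m j ≤ m i ∧ m i ≤ m j + 1) {i : Fin r} (hk : k < m i) :
    (q + r) * k + ∑ l, (n l - k) + i < ∑ l, n l + ∑ l, m l := by
  have hsplit : ∑ l, (n l - k) + q * k = ∑ l, n l := by
    have : ∑ _l : Fin q, k = q * k := by simp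
    rw [← this, ← sum_add_distrib]
    exact sum_congr rfl fun l _ => Nat.sub_add_cancel (le_of_abs_sub_le_one hnm hk l)
  have := mul_add_le_sum_of_stepLine hm hk
  nlinarith

end MultiIndex

theorem stmt_9_general
    (p q : ℕ) (hpq : q < p)
    (a : Fin p → ℝ) (b : Fin q → ℝ)
    (ha : ∀ i, -1 < a i) (hb : ∀ i, -1 < b i)
    (w : Fin q → ℝ → ℝ) (v : Fin (p - q) → ℝ → ℝ)
    (hw_cont : ∀ j, ContinuousOn (w j) (Set.Ioi 0))
    (hv_cont : ∀ i, ContinuousOn (v i) (Set.Ioi 0))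
    (hw_int : ∀ j, ∀ σ : ℝ, 0 < σ →
      IntegrableOn (fun x : ℝ => x ^ (σ - 1) * |w j x|) (Set.Ioi 0))
    (hv_int : ∀ i, ∀ σ : ℝ, 0 < σ →
      IntegrableOn (fun x : ℝ => x ^ (σ - 1) * |v i x|) (Set.Ioi 0))
    (hw_mellin : ∀ j, ∀ s : ℝ, 1 < s →
      ∫ x in Set.Ioi (0:ℝ), x ^ (s - 1) * w j x
        = (∏ i, Real.Gamma (s + a i)) /
          (∏ i, Real.Gamma (s + b i + if i = j then 1 else 0)))
    (hv_mellin : ∀ i, ∀ s : ℝ, 1 < s →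
      ∫ x in Set.Ioi (0:ℝ), x ^ (s - 1) * v i x
        = (∏ i', Real.Gamma (s + a i')) / (∏ i', Real.Gamma (s + b i')) *
            (s - 1) ^ (i : ℕ))
    (n : Fin q → ℕ) (m : Fin (p - q) → ℕ)
    (hnd1 : ∀ i j, |(n i : ℤ) - (n j : ℤ)| ≤ 1)
    (hnd3 : ∀ i j, |(n i : ℤ) - (m j : ℤ)| ≤ 1)
    (hmstep : ∀ i j : Fin (p - q), i ≤ j → m j ≤ m i ∧ m i ≤ m j + 1)
    (A : Fin q → Polynomial ℝ) (B : Fin (p - q) → Polynomial ℝ)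
    (hA : ∀ j, (A j).degree < (n j : WithBot ℕ))
    (hB : ∀ j, (B j).degree < (m j : WithBot ℕ)) :
    ∃ P : Polynomial ℝ, P.degree < ((∑ j, n j + ∑ j, m j : ℕ) : WithBot ℕ) ∧
      ∀ s : ℝ, 1 < s →
        ∫ x in Set.Ioi (0:ℝ),
            (∑ j, (A j).eval x * w j x + ∑ j, (B j).eval x * v j x) * x ^ (s - 1)
          = (∏ i, Real.Gamma (s + a i)) / (∏ i, Real.Gamma (s + b i + n i)) *
              P.eval s := by
  have hcard : Fintype.card (Fin p) = q + (p - q) := by simp; omega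
  have hw j : ∀ σ : ℝ, 1 < σ → IntegrableOn (fun x : ℝ => x ^ (σ - 1) * w j x) (Set.Ioi 0) :=
    fun σ hσ => integrableOn_rpow_mul_of_continuousOn (hw_cont j) (hw_int j σ (by linarith))
  have hv i : ∀ σ : ℝ, 1 < σ → IntegrableOn (fun x : ℝ => x ^ (σ - 1) * v i x) (Set.Ioi 0) :=
    fun σ hσ => integrableOn_rpow_mul_of_continuousOn (hv_cont i) (hv_int i σ (by linarith))
  have hQw (j : Fin q) := exists_integral_eval_mul_rpow_eq_gammaRatio_mul ha hb (hw j)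
    (d := fun l => if l = j then 1 else 0) (R := 1)
    (fun σ hσ => by simp [hw_mellin j σ hσ, gammaRatio, add_assoc]) (hA j)
    (fun k hk => single_add_le_of_abs_sub_le_one hnd1 hk)
    (fun k hk => by simpa [hcard] using add_mul_add_sum_sub_single_lt hnd1 hnd3 hk)
  have hQv (i : Fin (p - q)) := exists_integral_eval_mul_rpow_eq_gammaRatio_mul ha hb (hv i)
    (d := 0) (R := (X - C 1) ^ (i : ℕ)) (M := ∑ j, n j + ∑ j, m j)
    (fun σ hσ => by simp [hv_mellin i σ hσ, gammaRatio]) (hB i)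
    (fun k hk l => by simpa using le_of_abs_sub_le_one hnd3 hk l)
    (fun k hk => by
      rw [natDegree_pow, natDegree_X_sub_C, mul_one, hcard]
      simpa using add_mul_add_sum_sub_add_lt hnd3 hmstep hk)
  choose Qw hQw_deg hQw using hQw
  choose Qv hQv_deg hQv using hQv
  refine ⟨∑ j, Qw j + ∑ i, Qv i,
    mem_degreeLT.mp (add_mem (sum_mem fun j _ => hQw_deg j) (sum_mem fun i _ => hQv_deg i)),
    fun s hs => ?_⟩
  have hwA j := integrableOn_eval_mul_mul_rpow (hw j) hs (hA j)
  have hvB i := integrableOn_eval_mul_mul_rpow (hv i) hs (hB i)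
  simp only [add_mul, sum_mul]
  rw [integral_add (integrable_finsetSum _ fun j _ => hwA j)
      (integrable_finsetSum _ fun i _ => hvB i),
    integral_finsetSum _ fun j _ => hwA j, integral_finsetSum _ fun i _ => hvB i]
  simp only [hQw _ s hs, hQv _ s hs, eval_add, eval_finsetSum, ← mul_sum, ← mul_add,
    gammaRatio, add_assoc]

/-- In the Laguerre-like setting, for a multi-index `n ⊔ m` near the diagonal
with `m` on the step-line, the Mellin transform of a polynomial combination
`F(x) = ∑ j, A j (x) w j (x) + ∑ j, B j (x) v j (x)` equals `Γ(s+a)/Γ(s+b+n)` times a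
polynomial of degree at most `|n| + |m| - 1`. -/
theorem stmt_9
    (p q : ℕ) (hpq : q < p)
    (a : Fin p → ℝ) (b : Fin q → ℝ)
    (ha : ∀ i, -1 < a i) (hb : ∀ i, -1 < b i)
    (hab : ∀ j : Fin q, a (Fin.castLE hpq.le j) < b j)
    (w : Fin q → ℝ → ℝ) (v : Fin (p - q) → ℝ → ℝ)
    (hw_cont : ∀ j, ContinuousOn (w j) (Set.Ioi 0))
    (hv_cont : ∀ i, ContinuousOn (v i) (Set.Ioi 0))
    (hw_int : ∀ j, ∀ σ : ℝ, 0 < σ →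
      IntegrableOn (fun x : ℝ => x ^ (σ - 1) * |w j x|) (Set.Ioi 0))
    (hv_int : ∀ i, ∀ σ : ℝ, 0 < σ →
      IntegrableOn (fun x : ℝ => x ^ (σ - 1) * |v i x|) (Set.Ioi 0))
    (hw_mellin : ∀ j, ∀ s : ℝ, 1 < s →
      ∫ x in Set.Ioi (0:ℝ), x ^ (s - 1) * w j x
        = (∏ i, Real.Gamma (s + a i)) /
          (∏ i, Real.Gamma (s + b i + if i = j then 1 else 0)))
    (hv_mellin : ∀ i, ∀ s : ℝ, 1 < s →
      ∫ x in Set.Ioi (0:ℝ), x ^ (s - 1) * v i x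
        = (∏ i', Real.Gamma (s + a i')) / (∏ i', Real.Gamma (s + b i')) *
            (s - 1) ^ (i : ℕ))
    (n : Fin q → ℕ) (m : Fin (p - q) → ℕ)
    (hnd1 : ∀ i j, |(n i : ℤ) - (n j : ℤ)| ≤ 1)
    (hnd2 : ∀ i j, |(m i : ℤ) - (m j : ℤ)| ≤ 1)
    (hnd3 : ∀ i j, |(n i : ℤ) - (m j : ℤ)| ≤ 1)
    (hmstep : ∀ i j : Fin (p - q), i ≤ j → m j ≤ m i ∧ m i ≤ m j + 1)
    (A : Fin q → Polynomial ℝ) (B : Fin (p - q) → Polynomial ℝ)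
    (hA : ∀ j, (A j).degree < (n j : WithBot ℕ))
    (hB : ∀ j, (B j).degree < (m j : WithBot ℕ)) :
    ∃ P : Polynomial ℝ, P.degree < ((∑ j, n j + ∑ j, m j : ℕ) : WithBot ℕ) ∧
      ∀ s : ℝ, 1 < s →
        ∫ x in Set.Ioi (0:ℝ),
            (∑ j, (A j).eval x * w j x + ∑ j, (B j).eval x * v j x) * x ^ (s - 1)
          = (∏ i, Real.Gamma (s + a i)) / (∏ i, Real.Gamma (s + b i + n i)) *
              P.eval s :=
  stmt_9_general p q hpq a b ha hb w v hw_cont hv_cont hw_int hv_int hw_mellin hv_mellin n m hnd1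
    hnd3 hmstep A B hA hB
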